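/- Let J, K ⊆ S and let x be a minimal length (W_J, W_K)-double coset representative. Then x⁻¹W_J x ∩ W_K = W_L where L = (x⁻¹ J x) ∩ K; in particular the intersection of x⁻¹W_Jx with W_K is again a standard parabolic subgroup. -/

import Mathlib

/-!
Since `x` has no left descent in `J`, it is the shortest element of `W_J x`, and then
`ℓ (u * x) = ℓ u + ℓ x` for all `u ∈ W_J`; dually `ℓ (x * v) = ℓ x + ℓ v` for all `v ∈ W_K`.
Let `w ≠ 1` lie in `x⁻¹ W_J x ⊓ W_K` and let `s_b`, `b ∈ K`, be a left descent of `w`. Then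
`t = x s_b x⁻¹` is a left inversion of `u * x = x * w`, where `u = x w x⁻¹ ∈ W_J`. By the strong
exchange condition `t` occurs in the left inversion sequence of a `J`-word for `u` followed by a
reduced word for `x`. It cannot occur in the part coming from `x`, since `x` has no left inversion
`r` with `r * x ∈ x * W_K`; hence `t ∈ W_J`, and additivity of length forces `ℓ t = 1`, so
`t = s_j` with `j ∈ J`. Thus `b ∈ L`, and induction on `ℓ w` gives `w ∈ W_L`.

The strong exchange condition is proved with the sign representation of `W` on `W × ℤˣ`
(Björner–Brenti, *Combinatorics of Coxeter groups*, Theorem 1.4.3).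
-/

open List

namespace CoxeterSystem

variable {B W : Type*} [Group W] {M : CoxeterMatrix B} (cs : CoxeterSystem M W)

local prefix:100 "s" => cs.simple
local prefix:100 "π" => cs.wordProd
local prefix:100 "ℓ" => cs.length
local prefix:100 "lis" => cs.leftInvSeq

theorem leftInvSeq_append (α β : List B) :
    lis (α ++ β) = lis α ++ (lis β).map (MulAut.conj (π α)) := by
  induction α with
  | nil => simp [leftInvSeq]
  | cons i α ih =>
    simp only [cons_append, leftInvSeq, ih, map_append, map_map, wordProd_cons, map_mul]
    rfl

theorem prod_map_alternatingWord_two_mul {G : Type*} [Monoid G] (f : B → G) (i i' : B) (m : ℕ) :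
    ((alternatingWord i i' (2 * m)).map f).prod = (f i * f i') ^ m := by
  induction m with
  | zero => simp [alternatingWord]
  | succ m ih =>
    rw [show 2 * (m + 1) = 2 * m + 1 + 1 by ring, alternatingWord_succ', alternatingWord_succ']
    simp [ih, pow_succ', mul_assoc]

theorem even_count_leftInvSeq_alternatingWord [DecidableEq W] (i i' : B) (t : W) :
    Even ((lis (alternatingWord i i' (2 * M i i'))).count t) := by
  set L := lis (alternatingWord i i' (2 * M i i'))
  have hL : L.length = 2 * M i i' := by simp [L]
  -- the `k`-th entry is `π (alternatingWord i' i (2k+1))`, periodic in `k` with period `M i i'`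
  have hperiodic : L.drop (M i i') = L.take (M i i') := by
    refine List.ext_getElem (by simp [hL]; omega) fun k h₁ h₂ => ?_
    simp only [List.length_take, List.length_drop, hL] at h₁ h₂
    simp only [List.getElem_drop, List.getElem_take, L]
    rw [cs.getElem_leftInvSeq_alternatingWord i i' _ _ (by omega),
      cs.getElem_leftInvSeq_alternatingWord i i' _ _ (by omega)]
    simp only [prod_alternatingWord_eq_mul_pow, Nat.not_even_bit1, if_false]
    rw [show (2 * (M i i' + k) + 1) / 2 = M i i' + k by omega,
      show (2 * k + 1) / 2 = k by omega, pow_add, M.symmetric, cs.simple_mul_simple_pow, one_mul]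
  rw [← L.take_append_drop (M i i'), count_append, hperiodic]
  exact ⟨_, rfl⟩

section SignRepresentation

variable [DecidableEq W]

/-- The permutation `η_i` of Björner–Brenti. -/
def simpleSignPerm (i : B) : Equiv.Perm (W × ℤˣ) :=
  Equiv.prodShear (MulAut.conj (s i)).toEquiv fun w => Equiv.mulLeft (if w = s i then -1 else 1)

theorem simpleSignPerm_apply (i : B) (w : W) (e : ℤˣ) :
    cs.simpleSignPerm i (w, e) = (s i * w * s i, (if w = s i then -1 else 1) * e) := by
  simp [simpleSignPerm, Equiv.prodShear_apply, MulAut.conj_apply]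

theorem prod_map_simpleSignPerm (ω : List B) (t : W) (e : ℤˣ) :
    (ω.map cs.simpleSignPerm).prod ((π ω)⁻¹ * t * π ω, e) =
      (t, (-1) ^ (lis ω).count t * e) := by
  induction ω generalizing t with
  | nil => simp [leftInvSeq]
  | cons i ω ih =>
    have hfix : s i * t * s i = s i ↔ t = s i := by
      rw [mul_eq_right, mul_eq_one_iff_eq_inv', inv_simple]
    have hcount : (lis (i :: ω)).count t =
        (lis ω).count (s i * t * s i) + if t = s i then 1 else 0 := by
      have ht : t = MulAut.conj (s i) (s i * t * s i) := by simp [mul_assoc]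
      rw [leftInvSeq, count_cons, ht, count_map_of_injective _ _ (MulAut.conj (s i)).injective,
        ← ht]
      simp only [beq_iff_eq, @eq_comm _ (s i)]
    have hconj : (π (i :: ω))⁻¹ * t * π (i :: ω) = (π ω)⁻¹ * (s i * t * s i) * π ω := by
      simp [wordProd_cons, mul_assoc]
    rw [map_cons, prod_cons, Equiv.Perm.mul_apply, hconj, ih, simpleSignPerm_apply, hcount]
    simp only [hfix]
    split_ifs <;> simp [pow_succ, mul_assoc]

theorem isLiftable_simpleSignPerm : M.IsLiftable cs.simpleSignPerm := by
  intro i i'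
  rw [← prod_map_alternatingWord_two_mul]
  ext ⟨t, e⟩ : 1
  have hπ : π (alternatingWord i i' (2 * M i i')) = 1 := by
    rw [prod_alternatingWord_eq_mul_pow, if_pos (even_two_mul _), Nat.mul_div_cancel_left _ two_pos,
      simple_mul_simple_pow, one_mul]
  have := cs.prod_map_simpleSignPerm (alternatingWord i i' (2 * M i i')) t e
  rw [hπ, inv_one, one_mul, mul_one, (cs.even_count_leftInvSeq_alternatingWord i i' t).neg_one_pow,
    one_mul] at this
  rw [this, Equiv.Perm.one_apply]

noncomputable def signRep : W →* Equiv.Perm (W × ℤˣ) :=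
  cs.lift ⟨cs.simpleSignPerm, cs.isLiftable_simpleSignPerm⟩

theorem signRep_simple (i : B) : cs.signRep (s i) = cs.simpleSignPerm i :=
  cs.lift_apply_simple cs.isLiftable_simpleSignPerm i

theorem signRep_wordProd (ω : List B) (t : W) (e : ℤˣ) :
    cs.signRep (π ω) ((π ω)⁻¹ * t * π ω, e) = (t, (-1) ^ (lis ω).count t * e) := by
  rw [← prod_map_simpleSignPerm, wordProd, map_list_prod, map_map]
  congr 3
  funext i
  exact cs.signRep_simple i

theorem signRep_apply_self_of_isReflection {t : W} (ht : cs.IsReflection t) (e : ℤˣ) :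
    cs.signRep t (t, e) = (t, -e) := by
  obtain ⟨v, i, rfl⟩ := ht
  obtain ⟨ω, rfl⟩ := cs.wordProd_surjective v
  set σ : ℤˣ := (-1) ^ (lis ω).count (π ω * s i * (π ω)⁻¹)
  have hv : ∀ e, cs.signRep (π ω) (s i, e) = (π ω * s i * (π ω)⁻¹, σ * e) := by
    intro e
    rw [← signRep_wordProd]
    simp [mul_assoc]
  have hv' : (cs.signRep (π ω))⁻¹ (π ω * s i * (π ω)⁻¹, e) = (s i, σ⁻¹ * e) := by
    rw [Equiv.Perm.inv_eq_iff_eq, hv, mul_inv_cancel_left]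
  rw [map_mul, map_mul, map_inv, Equiv.Perm.mul_apply, Equiv.Perm.mul_apply, hv',
    signRep_simple, simpleSignPerm_apply, if_pos rfl, simple_mul_simple_self, one_mul, hv]
  simp [← mul_assoc, Int.units_mul_self]

end SignRepresentation

theorem mem_leftInvSeq_of_isLeftInversion {ω : List B} {t : W}
    (h : cs.IsLeftInversion (π ω) t) : t ∈ lis ω := by
  classical
  -- `signRep` shows that the parity of the number of occurrences of `t` in `lis ω` depends only
  -- on `π ω`; writing `π ω = t * π ω₀` with `ω₀` reduced, that parity is odd.
  obtain ⟨ht, hlt⟩ := h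
  obtain ⟨ω₀, hω₀, hω₀eq⟩ := cs.exists_isReduced (t * π ω)
  have hnot : t ∉ lis ω₀ := fun hmem => by
    have := (cs.isLeftInversion_of_mem_leftInvSeq hω₀ hmem).2
    rw [← hω₀eq, ← mul_assoc, ht.mul_self, one_mul] at this
    omega
  have hsplit : π ω = t * π ω₀ := by rw [← hω₀eq, ← mul_assoc, ht.mul_self, one_mul]
  have hpt : (π ω)⁻¹ * t * π ω = (π ω₀)⁻¹ * t * π ω₀ := by
    simp [hsplit, mul_assoc, ht.inv, ht.mul_self]
  have hsign : cs.signRep (π ω) ((π ω)⁻¹ * t * π ω, 1) = (t, -1) := by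
    rw [hpt, hsplit, map_mul, Equiv.Perm.mul_apply, signRep_wordProd, count_eq_zero.2 hnot,
      pow_zero, mul_one, signRep_apply_self_of_isReflection cs ht]
  rw [signRep_wordProd] at hsign
  refine count_pos_iff.1 (Nat.pos_of_ne_zero fun h0 => ?_)
  simp [h0] at hsign

theorem mem_leftInvSeq_or_isLeftInversion {α : List B} {x t : W}
    (h : cs.IsLeftInversion (π α * x) t) :
    t ∈ lis α ∨ cs.IsLeftInversion x ((π α)⁻¹ * t * π α) := by
  obtain ⟨ω, hω, rfl⟩ := cs.exists_isReduced x
  rw [← wordProd_append] at h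
  have := cs.mem_leftInvSeq_of_isLeftInversion h
  rw [leftInvSeq_append] at this
  rcases mem_append.1 this with ht | ht
  · exact .inl ht
  · obtain ⟨r, hr, rfl⟩ := mem_map.1 ht
    right
    simpa [MulAut.conj_apply, mul_assoc] using cs.isLeftInversion_of_mem_leftInvSeq hω hr

theorem exists_sublist_length_lt_of_not_isReduced {ω : List B} (hω : ¬ cs.IsReduced ω) :
    ∃ ω', ω'.Sublist ω ∧ ω'.length < ω.length ∧ π ω' = π ω := by
  induction ω with
  | nil => exact absurd (by simp [IsReduced]) hω
  | cons i α ih =>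
    by_cases hα : cs.IsReduced α
    · have hdesc : cs.IsLeftInversion (π α) (s i) := by
        refine ⟨cs.isReflection_simple i, ?_⟩
        rcases cs.length_simple_mul (π α) i with h | h
        · exact absurd (by rw [IsReduced, wordProd_cons, h, hα, length_cons]) hω
        · omega
      obtain ⟨k, hk, hki⟩ := List.mem_iff_getElem.1 (cs.mem_leftInvSeq_of_isLeftInversion hdesc)
      refine ⟨α.eraseIdx k, (α.eraseIdx_sublist k).cons i,
        Nat.lt_succ_of_le (α.eraseIdx_sublist k).length_le, ?_⟩
      rw [← getD_leftInvSeq_mul_wordProd, getD_eq_getElem _ _ hk, hki, wordProd_cons]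
    · obtain ⟨α', hsub, hlen, heq⟩ := ih hα
      exact ⟨i :: α', hsub.cons_cons i, by simpa, by rw [wordProd_cons, wordProd_cons, heq]⟩

abbrev parabolicSubgroup (J : Set B) : Subgroup W := Subgroup.closure (cs.simple '' J)

variable {cs} {J : Set B}

theorem exists_word_of_mem_parabolicSubgroup {u : W} (hu : u ∈ cs.parabolicSubgroup J) :
    ∃ ω : List B, (∀ b ∈ ω, b ∈ J) ∧ π ω = u := by
  induction hu using Subgroup.closure_induction with
  | mem _ hw =>
    obtain ⟨b, hb, rfl⟩ := hw
    exact ⟨[b], by simpa using hb, wordProd_singleton cs b⟩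
  | one => exact ⟨[], by simp, wordProd_nil cs⟩
  | mul _ _ _ _ ih₁ ih₂ =>
    obtain ⟨ω₁, h₁, rfl⟩ := ih₁
    obtain ⟨ω₂, h₂, rfl⟩ := ih₂
    exact ⟨ω₁ ++ ω₂, by simpa using fun b hb => hb.elim (h₁ b) (h₂ b), wordProd_append cs ω₁ ω₂⟩
  | inv _ _ ih =>
    obtain ⟨ω, h, rfl⟩ := ih
    exact ⟨ω.reverse, by simpa using h, wordProd_reverse cs ω⟩

theorem exists_isReduced_of_mem_parabolicSubgroup {u : W} (hu : u ∈ cs.parabolicSubgroup J) :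
    ∃ ω : List B, (∀ b ∈ ω, b ∈ J) ∧ cs.IsReduced ω ∧ π ω = u := by
  obtain ⟨ω, ⟨hJ, rfl⟩, hmin⟩ := (measure List.length).wf.has_min
    {ω : List B | (∀ b ∈ ω, b ∈ J) ∧ π ω = u} (exists_word_of_mem_parabolicSubgroup hu)
  refine ⟨ω, hJ, by_contra fun hred => ?_, rfl⟩
  obtain ⟨ω', hsub, hlen, heq⟩ := cs.exists_sublist_length_lt_of_not_isReduced hred
  exact hmin ω' ⟨fun b hb => hJ b (hsub.subset hb), heq⟩ hlen

theorem exists_isLeftDescent_of_mem_parabolicSubgroup {u : W} (hu : u ∈ cs.parabolicSubgroup J)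
    (hu₁ : u ≠ 1) : ∃ b ∈ J, cs.IsLeftDescent u b := by
  obtain ⟨_ | ⟨b, ω⟩, hJ, hred, rfl⟩ := exists_isReduced_of_mem_parabolicSubgroup hu
  · exact absurd (wordProd_nil cs) hu₁
  refine ⟨b, hJ b mem_cons_self, ?_⟩
  rw [IsLeftDescent, hred, wordProd_cons, simple_mul_simple_cancel_left, length_cons]
  exact (cs.length_wordProd_le ω).trans_lt (Nat.lt_succ_self _)

theorem exists_mem_simple_eq_of_length_eq_one {t : W} (ht : t ∈ cs.parabolicSubgroup J)
    (hℓ : ℓ t = 1) : ∃ j ∈ J, s j = t := by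
  obtain ⟨ω, hJ, hred, rfl⟩ := exists_isReduced_of_mem_parabolicSubgroup ht
  obtain ⟨j, rfl⟩ := List.length_eq_one_iff.1 (hred.symm.trans hℓ)
  exact ⟨j, hJ j mem_cons_self, (wordProd_singleton cs j).symm⟩

theorem leftInvSeq_subset_parabolicSubgroup {ω : List B} (hω : ∀ b ∈ ω, b ∈ J) :
    ∀ t ∈ lis ω, t ∈ cs.parabolicSubgroup J := by
  induction ω with
  | nil => simp [leftInvSeq]
  | cons i ω ih =>
    have hi : s i ∈ cs.parabolicSubgroup J := Subgroup.subset_closure ⟨i, hω i mem_cons_self, rfl⟩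
    simp only [leftInvSeq, mem_cons, mem_map, forall_eq_or_imp, forall_exists_index, and_imp,
      forall_apply_eq_imp_iff₂, MulAut.conj_apply]
    exact ⟨hi, fun r hr => mul_mem (mul_mem hi (ih (fun b hb => hω b (mem_cons_of_mem i hb)) r hr))
      (inv_mem hi)⟩

theorem length_mul_eq_add_of_forall_length_le {x : W}
    (hmin : ∀ v ∈ cs.parabolicSubgroup J, ℓ x ≤ ℓ (v * x)) {u : W}
    (hu : u ∈ cs.parabolicSubgroup J) : ℓ (u * x) = ℓ u + ℓ x := by
  induction hℓ : ℓ u using Nat.strong_induction_on generalizing u with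
  | _ n ih =>
  by_cases hu₁ : u = 1
  · simp [hu₁] at hℓ ⊢
    omega
  obtain ⟨b, hb, hdesc⟩ := exists_isLeftDescent_of_mem_parabolicSubgroup hu hu₁
  have hsb : s b ∈ cs.parabolicSubgroup J := Subgroup.subset_closure ⟨b, hb, rfl⟩
  obtain ⟨u', hu', rfl⟩ : ∃ u' ∈ cs.parabolicSubgroup J, u = s b * u' :=
    ⟨s b * u, mul_mem hsb hu, by simp⟩
  have hℓu' : ℓ u' + 1 = ℓ (s b * u') := by simpa using cs.isLeftDescent_iff.1 hdesc
  have ih' := ih (ℓ u') (by omega) hu' rfl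
  rw [mul_assoc]
  rcases cs.length_simple_mul (u' * x) b with h | h
  · omega
  obtain ⟨ω, hω, hωu'⟩ := cs.exists_isReduced u'
  have hinv : cs.IsLeftInversion (π ω * x) (s b) :=
    ⟨cs.isReflection_simple b, by rw [← hωu']; omega⟩
  rcases cs.mem_leftInvSeq_or_isLeftInversion hinv with hb' | hr
  · have := (cs.isLeftInversion_of_mem_leftInvSeq hω hb').2
    rw [← hωu'] at this
    omega
  · have hrJ : (π ω)⁻¹ * s b * π ω ∈ cs.parabolicSubgroup J := by
      rw [← hωu']
      exact mul_mem (mul_mem (inv_mem hu') hsb) hu'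
    exact absurd (hmin _ hrJ) (not_le.2 hr.2)

theorem length_le_length_mul_of_forall_length_lt {x : W} (hx : ∀ b ∈ J, ℓ x < ℓ (s b * x)) :
    ∀ v ∈ cs.parabolicSubgroup J, ℓ x ≤ ℓ (v * x) := by
  obtain ⟨v₀, hv₀, hmin⟩ := (InvImage.wf (fun v => ℓ (v * x)) wellFounded_lt).has_min
    (cs.parabolicSubgroup J : Set W) ⟨1, one_mem _⟩
  -- `v₀ * x` is a shortest element of `W_J x`; a left descent of `v₀⁻¹` would be one of `x`.
  have hmin₀ : ∀ v ∈ cs.parabolicSubgroup J, ℓ (v₀ * x) ≤ ℓ (v * (v₀ * x)) := fun v hv => by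
    simpa [InvImage, mul_assoc] using hmin (v * v₀) (mul_mem hv hv₀)
  obtain rfl : v₀ = 1 := by
    by_contra hv₀₁
    obtain ⟨b, hb, hdesc⟩ :=
      exists_isLeftDescent_of_mem_parabolicSubgroup (inv_mem hv₀) (inv_ne_one.2 hv₀₁)
    have hsb : s b ∈ cs.parabolicSubgroup J := Subgroup.subset_closure ⟨b, hb, rfl⟩
    have h₁ := length_mul_eq_add_of_forall_length_le hmin₀ (inv_mem hv₀)
    have h₂ := length_mul_eq_add_of_forall_length_le hmin₀ (mul_mem hsb (inv_mem hv₀))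
    rw [inv_mul_cancel_left] at h₁
    rw [mul_assoc, inv_mul_cancel_left] at h₂
    have := hx b hb
    unfold IsLeftDescent at hdesc
    omega
  simpa using hmin₀

theorem length_mul_eq_add_of_forall_length_lt {x : W} (hx : ∀ b ∈ J, ℓ x < ℓ (s b * x)) {u : W}
    (hu : u ∈ cs.parabolicSubgroup J) : ℓ (u * x) = ℓ u + ℓ x :=
  length_mul_eq_add_of_forall_length_le (length_le_length_mul_of_forall_length_lt hx) hu

variable {K : Set B}

theorem exists_simple_conj_eq_of_isLeftDescent {x w : W} (hxJ : ∀ b ∈ J, ℓ x < ℓ (s b * x))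
    (hxK : ∀ b ∈ K, ℓ x⁻¹ < ℓ (s b * x⁻¹)) (hwJ : x * w * x⁻¹ ∈ cs.parabolicSubgroup J)
    (hwK : w ∈ cs.parabolicSubgroup K) {b : B} (hb : b ∈ K) (hdesc : cs.IsLeftDescent w b) :
    ∃ j ∈ J, x⁻¹ * s j * x = s b := by
  have hJ : ∀ v ∈ cs.parabolicSubgroup J, ℓ (v * x) = ℓ v + ℓ x :=
    fun v hv => length_mul_eq_add_of_forall_length_lt hxJ hv
  have hK : ∀ v ∈ cs.parabolicSubgroup K, ℓ (x * v) = ℓ x + ℓ v := fun v hv => by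
    rw [← length_inv, mul_inv_rev, length_mul_eq_add_of_forall_length_lt hxK (inv_mem hv),
      length_inv, length_inv, add_comm]
  have hsb : s b ∈ cs.parabolicSubgroup K := Subgroup.subset_closure ⟨b, hb, rfl⟩
  obtain ⟨ω, hω, hωw⟩ := exists_word_of_mem_parabolicSubgroup hwJ
  have hinv : cs.IsLeftInversion (π ω * x) (x * s b * x⁻¹) := by
    refine ⟨⟨x, b, rfl⟩, ?_⟩
    rw [hωw, show x * s b * x⁻¹ * (x * w * x⁻¹ * x) = x * (s b * w) by group,
      show x * w * x⁻¹ * x = x * w by group, hK _ (mul_mem hsb hwK), hK w hwK]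
    exact Nat.add_lt_add_left hdesc _
  rcases cs.mem_leftInvSeq_or_isLeftInversion hinv with ht | ht
  · have htJ := leftInvSeq_subset_parabolicSubgroup hω _ ht
    have hℓ : ℓ (x * s b * x⁻¹) = 1 := by
      have := hJ _ htJ
      rw [show x * s b * x⁻¹ * x = x * s b by group, hK _ hsb, length_simple] at this
      omega
    obtain ⟨j, hj, hjt⟩ := exists_mem_simple_eq_of_length_eq_one htJ hℓ
    exact ⟨j, hj, by rw [hjt]; group⟩
  · have hr : (π ω)⁻¹ * (x * s b * x⁻¹) * π ω * x = x * (w⁻¹ * (s b * w)) := by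
      rw [hωw]
      group
    have := ht.2
    rw [hr, hK _ (mul_mem (inv_mem hwK) (mul_mem hsb hwK))] at this
    omega

theorem mem_parabolicSubgroup_of_conj_mem {x w : W} (hxJ : ∀ b ∈ J, ℓ x < ℓ (s b * x))
    (hxK : ∀ b ∈ K, ℓ x⁻¹ < ℓ (s b * x⁻¹)) (hwJ : x * w * x⁻¹ ∈ cs.parabolicSubgroup J)
    (hwK : w ∈ cs.parabolicSubgroup K) :
    w ∈ cs.parabolicSubgroup {b | b ∈ K ∧ ∃ j ∈ J, x⁻¹ * s j * x = s b} := by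
  induction hℓ : ℓ w using Nat.strong_induction_on generalizing w with
  | _ n ih =>
  by_cases hw₁ : w = 1
  · rw [hw₁]
    exact one_mem _
  obtain ⟨b, hb, hdesc⟩ := exists_isLeftDescent_of_mem_parabolicSubgroup hwK hw₁
  obtain ⟨j, hj, hjb⟩ := exists_simple_conj_eq_of_isLeftDescent hxJ hxK hwJ hwK hb hdesc
  have hsbJ : x * s b * x⁻¹ ∈ cs.parabolicSubgroup J := by
    rw [← hjb, show x * (x⁻¹ * s j * x) * x⁻¹ = s j by group]
    exact Subgroup.subset_closure ⟨j, hj, rfl⟩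
  have hsbw : x * (s b * w) * x⁻¹ ∈ cs.parabolicSubgroup J := by
    rw [show x * (s b * w) * x⁻¹ = x * s b * x⁻¹ * (x * w * x⁻¹) by group]
    exact mul_mem hsbJ hwJ
  have hsbK : s b ∈ cs.parabolicSubgroup K := Subgroup.subset_closure ⟨b, hb, rfl⟩
  have hsbL : s b ∈ cs.parabolicSubgroup {b | b ∈ K ∧ ∃ j ∈ J, x⁻¹ * s j * x = s b} :=
    Subgroup.subset_closure ⟨b, ⟨hb, j, hj, hjb⟩, rfl⟩
  simpa using mul_mem hsbL (ih _ (hℓ ▸ hdesc) hsbw (mul_mem hsbK hwK) rfl)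

end CoxeterSystem

theorem stmt_3_general {B W : Type*} [Group W] {M : CoxeterMatrix B}
    (cs : CoxeterSystem M W) (J K : Set B) (x : W)
    (hxJ : ∀ b ∈ J, cs.length x < cs.length (cs.simple b * x))
    (hxK : ∀ b ∈ K, cs.length x⁻¹ < cs.length (cs.simple b * x⁻¹)) :
    (Subgroup.closure (cs.simple '' J)).map (MulAut.conj x⁻¹).toMonoidHom ⊓
        Subgroup.closure (cs.simple '' K) =
      Subgroup.closure (cs.simple ''
        {b : B | b ∈ K ∧ ∃ j ∈ J, x⁻¹ * cs.simple j * x = cs.simple b}) := by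
  refine le_antisymm (fun w hw => ?_) ((Subgroup.closure_le _).2 ?_)
  · obtain ⟨⟨u, hu, rfl⟩, hwK⟩ := Subgroup.mem_inf.1 hw
    refine CoxeterSystem.mem_parabolicSubgroup_of_conj_mem hxJ hxK ?_ hwK
    simpa [MulAut.conj_apply, mul_assoc] using hu
  · rintro _ ⟨b, ⟨hb, j, hj, hjb⟩, rfl⟩
    refine ⟨⟨cs.simple j, Subgroup.subset_closure ⟨j, hj, rfl⟩, ?_⟩,
      Subgroup.subset_closure ⟨b, hb, rfl⟩⟩
    simpa [MulAut.conj_apply] using hjb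

/-- If `x` is a minimal length `(W_J, W_K)`-double coset representative, then
`x⁻¹ W_J x ⊓ W_K = W_L` where `L = (x⁻¹ J x) ∩ K` (as a subset of `S`, identified
with a subset of the index set). -/
theorem stmt_3 {B W : Type*} [Group W] [Finite W] {M : CoxeterMatrix B}
    (cs : CoxeterSystem M W) (J K : Set B) (x : W)
    (hxJ : ∀ b ∈ J, cs.length x < cs.length (cs.simple b * x))
    (hxK : ∀ b ∈ K, cs.length x⁻¹ < cs.length (cs.simple b * x⁻¹)) :
    (Subgroup.closure (cs.simple '' J)).map (MulAut.conj x⁻¹).toMonoidHom ⊓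
        Subgroup.closure (cs.simple '' K) =
      Subgroup.closure (cs.simple ''
        {b : B | b ∈ K ∧ ∃ j ∈ J, x⁻¹ * cs.simple j * x = cs.simple b}) :=
  stmt_3_general cs J K x hxJ hxK
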